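/- arXiv:1501.02321 — 6 statements merged into one kernel-verified Lean document; each statement's English description precedes it below -/
import Mathlib

section
/- Let G be a compact Hausdorff topological group with normalized Haar measure, and let π be a continuous unitary representation of G on a complex Hilbert space V. Let H be a finite-dimensional minimal nontrivial invariant closed subspace of V whose subrepresentation occurs with multiplicity one in π. Then for all v, w ∈ H and all v', w' ∈ V, ∫_G ⟨π(x)v, w⟩ · conj(⟨π(x)v', w'⟩) dx = ⟨v, v'⟩ · ⟨w', w⟩ / dim_ℂ H. -/
open MeasureTheory

local notation "⟪" x ", " y "⟫" => @inner ℂ _ _ x y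

/-- A submodule is invariant under a unitary representation. -/
def Invariant {G V : Type*} [Group G] [NormedAddCommGroup V] [InnerProductSpace ℂ V]
    (π : G →* (V ≃ₗᵢ[ℂ] V)) (H : Submodule ℂ V) : Prop :=
  ∀ (x : G) (v : V), v ∈ H → π x v ∈ H

/-- A closed submodule is a minimal nontrivial invariant closed subspace. -/
def MinimalInvariant {G V : Type*} [Group G] [NormedAddCommGroup V] [InnerProductSpace ℂ V]
    (π : G →* (V ≃ₗᵢ[ℂ] V)) (H : Submodule ℂ V) : Prop :=
  H ≠ ⊥ ∧ ∀ H' : Submodule ℂ V, IsClosed (H' : Set V) → Invariant π H' → H' ≤ H →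
    H' = ⊥ ∨ H' = H

/-- There is a `G`-equivariant unitary isomorphism between the invariant subspaces
`H` and `H'`. -/
def EquivariantUnitaryIso {G V : Type*} [Group G] [NormedAddCommGroup V]
    [InnerProductSpace ℂ V] (π : G →* (V ≃ₗᵢ[ℂ] V)) (H H' : Submodule ℂ V) : Prop :=
  ∃ U : H ≃ₗᵢ[ℂ] H', ∀ (x : G) (v w : H), (w : V) = π x (v : V) →
    ((U w : V)) = π x ((U v : V))

/-- The subrepresentation on the minimal invariant subspace `H` occurs with multiplicity one:
any minimal nontrivial invariant closed subspace equivariantly unitarily isomorphic to `H`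
coincides with `H`. -/
def MultiplicityOne {G V : Type*} [Group G] [NormedAddCommGroup V] [InnerProductSpace ℂ V]
    (π : G →* (V ≃ₗᵢ[ℂ] V)) (H : Submodule ℂ V) : Prop :=
  ∀ H' : Submodule ℂ V, IsClosed (H' : Set V) → Invariant π H' → MinimalInvariant π H' →
    EquivariantUnitaryIso π H H' → H' = H

/-!
Let `T` be the average over `G` of the rank-one operator `u ↦ ⟪v', u⟫ • v`; the integral is
`⟪w, T w'⟫`. `T` intertwines `π` and maps `V` into `H`, so by Schur's lemma it acts on `H` as a
scalar `c`, and its trace over an orthonormal basis of `H` gives `c * dim H = ⟪v', v⟫`.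
Multiplicity one forces `T` to vanish on `Hᗮ`: the component of `T†` mapping `H` to `Hᗮ` is an
intertwiner, so by Schur's lemma it is a multiple of an isometry, and if it were nonzero its image
would be a copy of `H` orthogonal to `H`.
-/

theorem OrthonormalBasis.sum_inner_mul_inner_of_mem {ι : Type*} [Fintype ι]
    {V : Type*} [NormedAddCommGroup V] [InnerProductSpace ℂ V] {H : Submodule ℂ V}
    (e : OrthonormalBasis ι ℂ H) (z : V) {y : V} (hy : y ∈ H) :
    ∑ i, ⟪z, (e i : V)⟫ * ⟪(e i : V), y⟫ = ⟪z, y⟫ := by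
  calc ∑ i, ⟪z, (e i : V)⟫ * ⟪(e i : V), y⟫ = ⟪z, ∑ i, ⟪(e i : V), y⟫ • (e i : V)⟫ := by
        simp only [inner_sum, inner_smul_right, mul_comm]
    _ = ⟪z, y⟫ := by
        congr 1
        simpa using congrArg Subtype.val (e.sum_repr' ⟨y, hy⟩)

section Representation

variable {G V : Type*} [Group G] [NormedAddCommGroup V] [InnerProductSpace ℂ V]

def Intertwines (π : G →* (V ≃ₗᵢ[ℂ] V)) (T : V → V) : Prop :=
  ∀ (g : G) (u : V), T (π g u) = π g (T u)

variable {π : G →* (V ≃ₗᵢ[ℂ] V)} {H : Submodule ℂ V}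

theorem Intertwines.comp {S T : V → V} (hS : Intertwines π S) (hT : Intertwines π T) :
    Intertwines π (S ∘ T) := fun g u => by
  simp only [Function.comp_apply, hT g u, hS g]

theorem inner_map_right (g : G) (x y : V) :
    ⟪x, π g y⟫ = ⟪π g⁻¹ x, y⟫ := by
  simpa using (π g).inner_map_map (π g⁻¹ x) y

theorem Invariant.orthogonal (hH : Invariant π H) : Invariant π Hᗮ := fun g z hz => by
  rw [Submodule.mem_orthogonal]
  intro a ha
  rw [inner_map_right]
  exact hz _ (hH g⁻¹ a ha)

theorem Invariant.starProjection_intertwines [H.HasOrthogonalProjection] (hH : Invariant π H) :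
    Intertwines π H.starProjection := fun g u => by
  refine Submodule.eq_starProjection_of_mem_orthogonal (u := π g u)
    (hH g _ (H.starProjection_apply_mem u)) ?_
  rw [← LinearIsometryEquiv.map_sub]
  exact hH.orthogonal g _ (H.sub_starProjection_mem_orthogonal u)

theorem Intertwines.adjoint [CompleteSpace V] {T : V →L[ℂ] V} (hT : Intertwines π T) :
    Intertwines π (ContinuousLinearMap.adjoint T) := fun g u => by
  refine ext_inner_left ℂ fun z => ?_
  calc ⟪z, T.adjoint (π g u)⟫ = ⟪π g⁻¹ (T z), u⟫ := by
        rw [ContinuousLinearMap.adjoint_inner_right, inner_map_right]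
    _ = ⟪z, π g (T.adjoint u)⟫ := by
        rw [← hT, ← ContinuousLinearMap.adjoint_inner_right, inner_map_right]

theorem Invariant.map (hH : Invariant π H) {S : V →ₗ[ℂ] V} (hS : Intertwines π S) :
    Invariant π (H.map S) := by
  rintro g _ ⟨a, ha, rfl⟩
  exact ⟨π g a, hH g a ha, hS g a⟩

theorem MinimalInvariant.map [FiniteDimensional ℂ H] (hmin : MinimalInvariant π H)
    (hH : Invariant π H) {S : V →ₗ[ℂ] V} (hS : Intertwines π S) (hinj : Set.InjOn S H) :
    MinimalInvariant π (H.map S) := by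
  refine ⟨?_, fun K _ hK hKS => ?_⟩
  · obtain ⟨a, ha, ha0⟩ := Submodule.exists_mem_ne_zero_of_ne_bot hmin.1
    refine (Submodule.ne_bot_iff _).2 ⟨S a, Submodule.mem_map_of_mem ha, fun hSa => ha0 ?_⟩
    exact hinj ha H.zero_mem (by rw [hSa, map_zero])
  set N := H ⊓ K.comap S
  have hNH : N ≤ H := inf_le_left
  have : FiniteDimensional ℂ N := Submodule.finiteDimensional_of_le hNH
  have hN : Invariant π N := fun g a ha =>
    ⟨hH g a ha.1, show S (π g a) ∈ K by rw [hS]; exact hK g _ ha.2⟩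
  have hK : K = N.map S := by
    refine le_antisymm (fun k hk => ?_) (Submodule.map_le_iff_le_comap.2 inf_le_right)
    obtain ⟨a, ha, rfl⟩ := hKS hk
    exact Submodule.mem_map_of_mem ⟨ha, hk⟩
  rcases hmin.2 N N.closed_of_finiteDimensional hN hNH with h | h
  · exact Or.inl (by rw [hK, h, Submodule.map_bot])
  · exact Or.inr (by rw [hK, h])

theorem MinimalInvariant.exists_eq_smul [FiniteDimensional ℂ H] (hmin : MinimalInvariant π H)
    (hH : Invariant π H) {B : V →ₗ[ℂ] V} (hB : Intertwines π B) (hBH : ∀ a ∈ H, B a ∈ H) :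
    ∃ c : ℂ, ∀ a ∈ H, B a = c • a := by
  have : Nontrivial H := Submodule.nontrivial_iff_ne_bot.mpr hmin.1
  obtain ⟨c, hc⟩ := Module.End.exists_eigenvalue (B.restrict hBH)
  obtain ⟨a, ha⟩ := hc.exists_hasEigenvector
  set E := H ⊓ Module.End.eigenspace B c
  have hmemE : ∀ u, u ∈ E ↔ u ∈ H ∧ B u = c • u := fun u => by
    rw [Submodule.mem_inf, Module.End.mem_eigenspace_iff]
  have hE : Invariant π E := fun g u hu => by
    rw [hmemE] at hu ⊢
    exact ⟨hH g u hu.1, by rw [hB, hu.2, map_smul]⟩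
  have hEne : E ≠ ⊥ := by
    refine (Submodule.ne_bot_iff _).2 ⟨a, (hmemE _).2 ⟨a.2, ?_⟩, by simpa using ha.2⟩
    simpa using congrArg Subtype.val ha.apply_eq_smul
  have : FiniteDimensional ℂ E := Submodule.finiteDimensional_of_le inf_le_left
  have hEH := (hmin.2 E E.closed_of_finiteDimensional hE inf_le_left).resolve_left hEne
  exact ⟨c, fun u hu => ((hmemE u).1 (hEH ▸ hu)).2⟩

theorem MultiplicityOne.map_eq [FiniteDimensional ℂ H] (hmult : MultiplicityOne π H)
    (hmin : MinimalInvariant π H) (hH : Invariant π H) {S : V →ₗ[ℂ] V} (hS : Intertwines π S)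
    (hiso : ∀ a ∈ H, ‖S a‖ = ‖a‖) : H.map S = H := by
  let f : H →ₗᵢ[ℂ] V := ⟨S ∘ₗ H.subtype, fun a => hiso a a.2⟩
  have hf : LinearMap.range f.toLinearMap = H.map S := by
    rw [LinearMap.range_comp, Submodule.range_subtype]
  let U : H ≃ₗᵢ[ℂ] H.map S := f.equivRange.trans (LinearIsometryEquiv.ofEq _ _ hf)
  have hinj : Set.InjOn S H := fun a ha b hb hab => by
    rw [← sub_eq_zero, ← norm_eq_zero, ← hiso _ (H.sub_mem ha hb), map_sub, hab, sub_self,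
      norm_zero]
  refine hmult _ (Submodule.closed_of_finiteDimensional _) (hH.map hS) (hmin.map hH hS hinj)
    ⟨U, fun g a b hab => ?_⟩
  change S b = π g (S a)
  rw [hab, hS]

theorem MinimalInvariant.exists_norm_apply_eq_mul_norm [CompleteSpace V] [FiniteDimensional ℂ H]
    (hmin : MinimalInvariant π H) (hH : Invariant π H) {S : V →L[ℂ] V} (hS : Intertwines π S) :
    ∃ r : ℝ, 0 ≤ r ∧ ∀ a ∈ H, ‖S a‖ = r * ‖a‖ := by
  obtain ⟨c, hc⟩ : ∃ c : ℂ, ∀ a ∈ H, H.starProjection (S.adjoint (S a)) = c • a :=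
    hmin.exists_eq_smul hH (B := H.starProjection ∘L S.adjoint ∘L S)
      (hH.starProjection_intertwines.comp (hS.adjoint.comp hS))
      (fun a _ => H.starProjection_apply_mem _)
  refine ⟨√c.re, Real.sqrt_nonneg _, fun a ha => ?_⟩
  have hsq : ((‖S a‖ ^ 2 : ℝ) : ℂ) = c * (‖a‖ ^ 2 : ℝ) := calc
    ((‖S a‖ ^ 2 : ℝ) : ℂ) = ⟪a, S.adjoint (S a)⟫ := by
      rw [ContinuousLinearMap.adjoint_inner_right, inner_self_eq_norm_sq_to_K]; norm_cast
    _ = ⟪a, H.starProjection (S.adjoint (S a))⟫ := by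
      rw [← Submodule.inner_starProjection_left_eq_right, Submodule.starProjection_eq_self_iff.2 ha]
    _ = c * (‖a‖ ^ 2 : ℝ) := by
      rw [hc a ha, inner_smul_right, inner_self_eq_norm_sq_to_K]; norm_cast
  have hsq' : ‖S a‖ ^ 2 = c.re * ‖a‖ ^ 2 := by
    simpa only [Complex.ofReal_re, Complex.re_mul_ofReal] using congrArg Complex.re hsq
  rw [← Real.sqrt_sq (norm_nonneg (S a)), hsq', Real.sqrt_mul' _ (sq_nonneg _),
    Real.sqrt_sq (norm_nonneg a)]

theorem MultiplicityOne.eq_zero_of_mapsTo_orthogonal [CompleteSpace V] [FiniteDimensional ℂ H]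
    (hmult : MultiplicityOne π H) (hmin : MinimalInvariant π H) (hH : Invariant π H)
    {S : V →L[ℂ] V} (hS : Intertwines π S) (hSH : ∀ a ∈ H, S a ∈ Hᗮ) {a : V} (ha : a ∈ H) :
    S a = 0 := by
  obtain ⟨r, hr0, hr⟩ := hmin.exists_norm_apply_eq_mul_norm hH hS
  rcases hr0.eq_or_lt with rfl | hrpos
  · simpa using hr a ha
  let S' : V →ₗ[ℂ] V := (r : ℂ)⁻¹ • (S : V →ₗ[ℂ] V)
  have hS' : Intertwines π S' := fun g u => by simp [S', hS g u]
  have hiso : ∀ b ∈ H, ‖S' b‖ = ‖b‖ := fun b hb => by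
    simp [S', norm_smul, hr b hb, abs_of_pos hrpos, hrpos.ne']
  have hS'a : S' a = 0 := by
    refine Submodule.disjoint_def.1 H.orthogonal_disjoint _ ?_ (Hᗮ.smul_mem _ (hSH a ha))
    rw [← hmult.map_eq hmin hH hS' hiso]
    exact Submodule.mem_map_of_mem ha
  simpa [S', hrpos.ne'] using hS'a

theorem MultiplicityOne.apply_eq_zero_of_mem_orthogonal [CompleteSpace V] [FiniteDimensional ℂ H]
    (hmult : MultiplicityOne π H) (hmin : MinimalInvariant π H) (hH : Invariant π H)
    {T : V →L[ℂ] V} (hT : Intertwines π T) (hTH : ∀ u, T u ∈ H) {u : V} (hu : u ∈ Hᗮ) :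
    T u = 0 := by
  have hS : ∀ a ∈ H, Hᗮ.starProjection (T.adjoint a) = 0 := fun a ha =>
    hmult.eq_zero_of_mapsTo_orthogonal hmin hH (S := Hᗮ.starProjection ∘L T.adjoint)
      (hH.orthogonal.starProjection_intertwines.comp hT.adjoint)
      (fun b _ => Hᗮ.starProjection_apply_mem _) ha
  have hTu : ∀ a ∈ H, ⟪a, T u⟫ = 0 := fun a ha => by
    rw [← ContinuousLinearMap.adjoint_inner_left, ← Submodule.starProjection_eq_self_iff.2 hu,
      ← Submodule.inner_starProjection_left_eq_right, hS a ha, inner_zero_left]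
  exact inner_self_eq_zero.1 (hTu _ (hTH u))

end Representation

section AveragedRankOne

open InnerProductSpace

variable {G V : Type*} [Group G] [TopologicalSpace G] [CompactSpace G]
  [MeasurableSpace G] [BorelSpace G] (μ : Measure G)
  [NormedAddCommGroup V] [InnerProductSpace ℂ V]
  (π : G →* (V ≃ₗᵢ[ℂ] V))

/-- The average over `G` of the conjugates `π x ∘ rankOne ℂ a b ∘ π x⁻¹`. -/
noncomputable def averagedRankOne (a b : V) : V →L[ℂ] V :=
  ∫ x, rankOne ℂ (π x a) (π x b) ∂μ

variable {π} (hcont : ∀ v : V, Continuous fun x => π x v)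
include hcont

theorem integrable_rankOne [IsFiniteMeasure μ] (a b : V) :
    Integrable (fun x => rankOne ℂ (π x a) (π x b)) μ :=
  Continuous.integrable_of_hasCompactSupport
    (by simp only [rankOne_def]; fun_prop) (HasCompactSupport.of_compactSpace _)

variable [CompleteSpace V]

theorem inner_averagedRankOne_apply [IsFiniteMeasure μ] (a b c u : V) :
    ⟪c, averagedRankOne μ π a b u⟫ = ∫ x, ⟪c, π x a⟫ * ⟪π x b, u⟫ ∂μ := by
  rw [averagedRankOne, ContinuousLinearMap.integral_apply (integrable_rankOne μ hcont a b),
    ← integral_inner ((integrable_rankOne μ hcont a b).apply_continuousLinearMap u)]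
  simp only [inner_right_rankOne_apply]

theorem averagedRankOne_intertwines [IsTopologicalGroup G] [IsFiniteMeasure μ]
    [μ.IsMulLeftInvariant] (a b : V) :
    Intertwines π (averagedRankOne μ π a b) := fun g u => by
  have hshift : ∀ x, rankOne ℂ (π (g * x) a) (π (g * x) b) (π g u)
      = (π g).toLinearIsometry (rankOne ℂ (π x a) (π x b) u) := fun x => by
    simp [map_mul, LinearIsometryEquiv.inner_map_map]
  rw [averagedRankOne, ContinuousLinearMap.integral_apply (integrable_rankOne μ hcont a b),
    ContinuousLinearMap.integral_apply (integrable_rankOne μ hcont a b),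
    ← integral_mul_left_eq_self _ g]
  simp only [hshift, LinearIsometry.integral_comp_comm]
  rfl

theorem averagedRankOne_apply_mem [IsProbabilityMeasure μ] {H : Submodule ℂ V}
    (hHclosed : IsClosed (H : Set V)) (hH : Invariant π H) {a : V} (ha : a ∈ H) (b u : V) :
    averagedRankOne μ π a b u ∈ H := by
  rw [averagedRankOne, ContinuousLinearMap.integral_apply (integrable_rankOne μ hcont a b)]
  exact (H.restrictScalars ℝ).convex.integral_mem hHclosed
    (ae_of_all _ fun x => H.smul_mem _ (hH x a ha))
    ((integrable_rankOne μ hcont a b).apply_continuousLinearMap u)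

theorem sum_inner_averagedRankOne_apply [IsProbabilityMeasure μ] {H : Submodule ℂ V}
    (hH : Invariant π H) {ι : Type*} [Fintype ι] (e : OrthonormalBasis ι ℂ H) {a : V} (ha : a ∈ H)
    (b : V) : ∑ i, ⟪(e i : V), averagedRankOne μ π a b (e i)⟫ = ⟪b, a⟫ := by
  simp only [inner_averagedRankOne_apply μ hcont]
  have hint : ∀ c, Integrable (fun x => ⟪c, π x a⟫ * ⟪π x b, c⟫) μ := fun c =>
    have := hcont a; have := hcont b
    Continuous.integrable_of_hasCompactSupport (by fun_prop) (HasCompactSupport.of_compactSpace _)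
  rw [← integral_finsetSum _ fun i _ => hint _]
  simp only [mul_comm ⟪(e _ : V), _⟫, e.sum_inner_mul_inner_of_mem _ (hH _ a ha),
    LinearIsometryEquiv.inner_map_map, integral_const, probReal_univ, one_smul]

end AveragedRankOne

/-- Mathlib's inner product is conjugate-linear in the first argument, so `⟪w, π x v⟫` is the
paper's `⟨π(x)v, w⟩`. -/
theorem schur_orthogonality_multiplicity_one_general
    {G V : Type*} [Group G] [TopologicalSpace G] [IsTopologicalGroup G] [CompactSpace G]
    [MeasurableSpace G] [BorelSpace G]
    (μ : Measure G) [μ.IsHaarMeasure] [IsProbabilityMeasure μ]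
    [NormedAddCommGroup V] [InnerProductSpace ℂ V] [CompleteSpace V]
    (π : G →* (V ≃ₗᵢ[ℂ] V)) (hcont : ∀ v : V, Continuous fun x => π x v)
    (H : Submodule ℂ V) (hHclosed : IsClosed (H : Set V)) (hHfin : FiniteDimensional ℂ H)
    (hHinv : Invariant π H) (hHmin : MinimalInvariant π H) (hHmult : MultiplicityOne π H)
    (v w : V) (hv : v ∈ H) (hw : w ∈ H) (v' w' : V) :
    ∫ x, ⟪w, π x v⟫ * ⟪π x v', w'⟫ ∂μ
      = ⟪v', v⟫ * ⟪w, w'⟫ / (Module.finrank ℂ H : ℂ) := by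
  set T := averagedRankOne μ π v v' with hT_def
  have hTH : ∀ u, T u ∈ H := averagedRankOne_apply_mem μ hcont hHclosed hHinv hv v'
  have hT : Intertwines π T := averagedRankOne_intertwines μ hcont v v'
  obtain ⟨c, hc⟩ : ∃ c : ℂ, ∀ a ∈ H, T a = c • a :=
    hHmin.exists_eq_smul hHinv hT fun a _ => hTH a
  have hdim : (Module.finrank ℂ H : ℂ) * c = ⟪v', v⟫ := by
    rw [← sum_inner_averagedRankOne_apply μ hcont hHinv (stdOrthonormalBasis ℂ H) hv v']
    simp only [← hT_def, hc _ (Subtype.prop _), inner_smul_right, ← Submodule.coe_inner,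
      OrthonormalBasis.inner_eq_one, mul_one, Finset.sum_const, Finset.card_univ,
      Fintype.card_fin, nsmul_eq_mul]
  have hTw' : T w' = c • H.starProjection w' := calc
    T w' = T (H.starProjection w') + T (w' - H.starProjection w') := by
      rw [← map_add, add_sub_cancel]
    _ = c • H.starProjection w' := by
      rw [hc _ (H.starProjection_apply_mem w'), add_eq_left]
      exact hHmult.apply_eq_zero_of_mem_orthogonal hHmin hHinv hT hTH
        (H.sub_starProjection_mem_orthogonal w')
  have : Nontrivial H := Submodule.nontrivial_iff_ne_bot.mpr hHmin.1
  have hn : (Module.finrank ℂ H : ℂ) ≠ 0 := by exact_mod_cast Module.finrank_pos.ne'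
  rw [← inner_averagedRankOne_apply μ hcont, hTw', inner_smul_right,
    ← Submodule.inner_starProjection_left_eq_right, Submodule.starProjection_eq_self_iff.2 hw,
    ← hdim]
  field_simp

/-- Schur orthogonality relations for matrix coefficients of a multiplicity-one
subrepresentation: with the paper's convention (inner products linear in the first variable),
`∫_G ⟨π(x)v, w⟩ conj(⟨π(x)v', w'⟩) dx = ⟨v, v'⟩⟨w', w⟩ / dim H`. -/
theorem schur_orthogonality_multiplicity_one
    {G V : Type*} [Group G] [TopologicalSpace G] [IsTopologicalGroup G] [CompactSpace G]
    [T2Space G] [MeasurableSpace G] [BorelSpace G]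
    (μ : Measure G) [μ.IsHaarMeasure] [IsProbabilityMeasure μ]
    [NormedAddCommGroup V] [InnerProductSpace ℂ V] [CompleteSpace V]
    (π : G →* (V ≃ₗᵢ[ℂ] V)) (hcont : ∀ v : V, Continuous fun x => π x v)
    (H : Submodule ℂ V) (hHclosed : IsClosed (H : Set V)) (hHfin : FiniteDimensional ℂ H)
    (hHinv : Invariant π H) (hHmin : MinimalInvariant π H) (hHmult : MultiplicityOne π H)
    (v w : V) (hv : v ∈ H) (hw : w ∈ H) (v' w' : V) :
    ∫ x, ⟪w, π x v⟫ * ⟪π x v', w'⟫ ∂μ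
      = ⟪v', v⟫ * ⟪w, w'⟫ / (Module.finrank ℂ H : ℂ) :=
  schur_orthogonality_multiplicity_one_general μ π hcont H hHclosed hHfin hHinv hHmin hHmult v w hv
    hw v' w'
end

section
/- Let G be a compact Hausdorff topological group with normalized Haar measure, and let π be a continuous unitary representation of G on a complex Hilbert space V. Let H and H' be finite-dimensional minimal nontrivial invariant closed subspaces of V such that there exists no nonzero bounded linear map T : H → H' with T π(x)|_H = π(x)|_{H'} T for all x ∈ G (the subrepresentations on H and H' are inequivalent). Then for every w ∈ H, w' ∈ H' and all u, u' ∈ V, ∫_G ⟨π(x)u, w⟩ · ⟨w', π(x)u'⟩ dx = 0; that is, the G-average of the rank-one operator u ↦ ⟨u, w⟩ w' vanishes. -/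
open MeasureTheory

local notation "⟪" x ", " y "⟫" => @inner ℂ _ _ x y

/-!
Write `A` for the average `∫ π(x)⁻¹ ∘ R ∘ π(x) dx` of the rank-one operator `R u = ⟪w, u⟫ w'`.
The integral in the theorem is `⟪u', A u⟫`. Right invariance of the Haar probability measure of a
compact group makes `A` commute with every `π(y)`. Since `H` and `H'` are invariant, `A` kills `Hᗮ`
and takes values in `H'`, so `A` restricted to `H` is a bounded intertwiner `H → H'`; by
inequivalence it vanishes, hence `A = 0` on `H ⊕ Hᗮ = V`.
-/

open InnerProductSpace

theorem MeasureTheory.Measure.isMulRightInvariant_of_isProbabilityMeasure {G : Type*} [Group G]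
    [TopologicalSpace G] [IsTopologicalGroup G] [CompactSpace G] [MeasurableSpace G]
    [BorelSpace G] (μ : Measure G) [μ.IsHaarMeasure] [IsProbabilityMeasure μ] :
    μ.IsMulRightInvariant where
  map_mul_right_eq_self g :=
    have := isProbabilityMeasure_map (μ := μ) (measurable_mul_const g).aemeasurable
    isHaarMeasure_eq_of_isProbabilityMeasure _ μ

theorem Continuous.rankOne {𝕜 X E F : Type*} [RCLike 𝕜] [TopologicalSpace X]
    [NormedAddCommGroup E] [NormedSpace 𝕜 E] [NormedAddCommGroup F] [InnerProductSpace 𝕜 F]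
    {f : X → E} {g : X → F} (hf : Continuous f) (hg : Continuous g) :
    Continuous fun x => rankOne 𝕜 (f x) (g x) := by
  simp only [rankOne_def]
  exact isBoundedBilinearMap_smulRight.continuous.comp
    (((innerSL 𝕜).continuous.comp hg).prodMk hf)

section Average

variable {G V : Type*} [Group G] [NormedAddCommGroup V] [InnerProductSpace ℂ V]
  (π : G →* (V ≃ₗᵢ[ℂ] V))

theorem conj_rankOne (x : G) (a b : V) :
    (π x⁻¹ : V →L[ℂ] V) ∘L rankOne ℂ a b ∘L (π x : V →L[ℂ] V) =
      rankOne ℂ (π x⁻¹ a) (π x⁻¹ b) := by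
  ext v
  simp [LinearIsometryEquiv.inner_map_eq_flip, LinearIsometryEquiv.inv_def]

def NoNonzeroIntertwiner (H H' : Submodule ℂ V) : Prop :=
  ∀ T : H →L[ℂ] H',
    (∀ (x : G) (v w : H), (w : V) = π x (v : V) → ((T w : V)) = π x ((T v : V))) → T = 0

theorem eq_zero_of_noNonzeroIntertwiner {H H' : Submodule ℂ V} [H.HasOrthogonalProjection]
    (hHH' : NoNonzeroIntertwiner π H H') (S : V →L[ℂ] V)
    (hS : ∀ (y : G) (v : V), S (π y v) = π y (S v)) (hSH' : ∀ v, S v ∈ H')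
    (hSH : ∀ v ∈ Hᗮ, S v = 0) : S = 0 := by
  have hT : S.codRestrict H' hSH' ∘L H.subtypeL = 0 :=
    hHH' _ fun x v w hvw => by simp [hvw, hS]
  ext v
  obtain ⟨p, hp, q, hq, rfl⟩ := H.exists_add_mem_mem_orthogonal v
  have hSp : S p = 0 := congr(($hT ⟨p, hp⟩ : V))
  simp [hSp, hSH q hq]

variable [MeasurableSpace G] (μ : Measure G)

noncomputable def conjAverage (T : V →L[ℂ] V) : V →L[ℂ] V :=
  ∫ x, (π x⁻¹ : V →L[ℂ] V) ∘L T ∘L (π x : V →L[ℂ] V) ∂μ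

theorem conjAverage_conj [MeasurableMul G] [μ.IsMulRightInvariant] (T : V →L[ℂ] V) (y : G) :
    (π y⁻¹ : V →L[ℂ] V) ∘L conjAverage π μ T ∘L (π y : V →L[ℂ] V) = conjAverage π μ T := by
  -- a continuous linear equivalence commutes with the Bochner integral even without integrability
  let conjBy : (V →L[ℂ] V) ≃L[ℂ] (V →L[ℂ] V) :=
    (π y⁻¹ : V ≃L[ℂ] V).arrowCongr (π y⁻¹ : V ≃L[ℂ] V)
  have hconj : ∀ S, conjBy S = (π y⁻¹ : V →L[ℂ] V) ∘L S ∘L (π y : V →L[ℂ] V) := fun S => by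
    ext v; simp [conjBy, LinearIsometryEquiv.inv_def]
  calc _ = conjBy (conjAverage π μ T) := (hconj _).symm
    _ = ∫ x, conjBy ((π x⁻¹ : V →L[ℂ] V) ∘L T ∘L (π x : V →L[ℂ] V)) ∂μ :=
      (ContinuousLinearEquiv.integral_comp_comm _ _).symm
    _ = ∫ x, (π (x * y)⁻¹ : V →L[ℂ] V) ∘L T ∘L (π (x * y) : V →L[ℂ] V) ∂μ := by
      congr 1; ext x v; simp [hconj]
    _ = conjAverage π μ T :=
      integral_mul_right_eq_self (fun x => (π x⁻¹ : V →L[ℂ] V) ∘L T ∘L (π x : V →L[ℂ] V)) y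

theorem conjAverage_apply_map [MeasurableMul G] [μ.IsMulRightInvariant] (T : V →L[ℂ] V) (y : G)
    (v : V) : conjAverage π μ T (π y v) = π y (conjAverage π μ T v) :=
  calc conjAverage π μ T (π y v)
      = π y (((π y⁻¹ : V →L[ℂ] V) ∘L conjAverage π μ T ∘L (π y : V →L[ℂ] V)) v) := by
        simp [LinearIsometryEquiv.inv_def]
    _ = π y (conjAverage π μ T v) := by rw [conjAverage_conj]

variable [TopologicalSpace G] [IsTopologicalGroup G] [CompactSpace G] [OpensMeasurableSpace G]
  [IsFiniteMeasure μ] {π}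

theorem integrable_conj_rankOne (hcont : ∀ v : V, Continuous fun x => π x v) (a b : V) :
    Integrable (fun x => rankOne ℂ (π x⁻¹ a) (π x⁻¹ b)) μ :=
  (((hcont a).comp continuous_inv).rankOne ((hcont b).comp continuous_inv))
    |>.integrable_of_hasCompactSupport (.of_compactSpace _)

theorem conjAverage_rankOne_apply (hcont : ∀ v : V, Continuous fun x => π x v) (a b v : V) :
    conjAverage π μ (rankOne ℂ a b) v = ∫ x, ⟪π x⁻¹ b, v⟫ • π x⁻¹ a ∂μ := by
  simp only [conjAverage, conj_rankOne]
  exact ContinuousLinearMap.integral_apply (integrable_conj_rankOne μ hcont a b) v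

theorem conjAverage_rankOne_apply_eq_zero (hcont : ∀ v : V, Continuous fun x => π x v)
    {K : Submodule ℂ V} (hKinv : Invariant π K) (a : V)
    {b : V} (hb : b ∈ K) {v : V} (hv : v ∈ Kᗮ) : conjAverage π μ (rankOne ℂ a b) v = 0 := by
  have hzero (x : G) : ⟪π x⁻¹ b, v⟫ = 0 := (K.mem_orthogonal v).mp hv _ (hKinv _ b hb)
  simp only [conjAverage_rankOne_apply μ hcont, hzero, zero_smul, integral_zero]

variable [CompleteSpace V]

theorem inner_conjAverage_rankOne_apply (hcont : ∀ v : V, Continuous fun x => π x v)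
    (w w' u u' : V) :
    ⟪u', conjAverage π μ (rankOne ℂ w' w) u⟫ = ∫ x, ⟪w, π x u⟫ * ⟪π x u', w'⟫ ∂μ := by
  have hint : Integrable (fun x => ⟪π x⁻¹ w, u⟫ • π x⁻¹ w') μ :=
    (integrable_conj_rankOne μ hcont w' w).apply_continuousLinearMap u
  rw [conjAverage_rankOne_apply μ hcont, ← integral_inner hint]
  congr 1 with x
  simp [inner_smul_right, LinearIsometryEquiv.inner_map_eq_flip, LinearIsometryEquiv.inv_def]

theorem conjAverage_rankOne_apply_mem [IsProbabilityMeasure μ]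
    (hcont : ∀ v : V, Continuous fun x => π x v) {K : Submodule ℂ V}
    (hKclosed : IsClosed (K : Set V)) (hKinv : Invariant π K) {a : V} (ha : a ∈ K) (b v : V) :
    conjAverage π μ (rankOne ℂ a b) v ∈ K := by
  rw [conjAverage_rankOne_apply μ hcont]
  exact (K.restrictScalars ℝ).convex.integral_mem hKclosed
    (.of_forall fun x => K.smul_mem _ (hKinv _ a ha))
    ((integrable_conj_rankOne μ hcont a b).apply_continuousLinearMap v)

end Average

theorem averaged_rank_one_operator_inequivalent_eq_zero_general
    {G V : Type*} [Group G] [TopologicalSpace G] [IsTopologicalGroup G] [CompactSpace G]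
    [MeasurableSpace G] [BorelSpace G]
    (μ : Measure G) [μ.IsHaarMeasure] [IsProbabilityMeasure μ]
    [NormedAddCommGroup V] [InnerProductSpace ℂ V] [CompleteSpace V]
    (π : G →* (V ≃ₗᵢ[ℂ] V)) (hcont : ∀ v : V, Continuous fun x => π x v)
    (H H' : Submodule ℂ V)
    (hHclosed : IsClosed (H : Set V)) (hH'closed : IsClosed (H' : Set V))
    (hHinv : Invariant π H) (hH'inv : Invariant π H')
    (hineq : ∀ T : H →L[ℂ] H',
      (∀ (x : G) (v w : H), (w : V) = π x (v : V) → ((T w : V)) = π x ((T v : V))) → T = 0)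
    (w : V) (hw : w ∈ H) (w' : V) (hw' : w' ∈ H') (u u' : V) :
    ∫ x, ⟪w, π x u⟫ * ⟪π x u', w'⟫ ∂μ = 0 := by
  have := μ.isMulRightInvariant_of_isProbabilityMeasure
  have := hHclosed.completeSpace_coe
  have hA : conjAverage π μ (rankOne ℂ w' w) = 0 :=
    eq_zero_of_noNonzeroIntertwiner π hineq _ (conjAverage_apply_map π μ _)
      (conjAverage_rankOne_apply_mem μ hcont hH'closed hH'inv hw' w)
      (fun _ => conjAverage_rankOne_apply_eq_zero μ hcont hHinv w' hw)
  rw [← inner_conjAverage_rankOne_apply μ hcont, hA, zero_apply, inner_zero_right]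

/-- Matrix coefficients of inequivalent irreducible subrepresentations are orthogonal:
if there is no nonzero bounded intertwining operator `T : H → H'`, then the `G`-average of the
rank-one operator `u ↦ ⟨u, w⟩ w'` vanishes (paper convention: inner products linear in the
first variable). -/
theorem averaged_rank_one_operator_inequivalent_eq_zero
    {G V : Type*} [Group G] [TopologicalSpace G] [IsTopologicalGroup G] [CompactSpace G]
    [T2Space G] [MeasurableSpace G] [BorelSpace G]
    (μ : Measure G) [μ.IsHaarMeasure] [IsProbabilityMeasure μ]
    [NormedAddCommGroup V] [InnerProductSpace ℂ V] [CompleteSpace V]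
    (π : G →* (V ≃ₗᵢ[ℂ] V)) (hcont : ∀ v : V, Continuous fun x => π x v)
    (H H' : Submodule ℂ V)
    (hHclosed : IsClosed (H : Set V)) (hH'closed : IsClosed (H' : Set V))
    (hHfin : FiniteDimensional ℂ H) (hH'fin : FiniteDimensional ℂ H')
    (hHinv : Invariant π H) (hH'inv : Invariant π H')
    (hHmin : MinimalInvariant π H) (hH'min : MinimalInvariant π H')
    (hineq : ∀ T : H →L[ℂ] H',
      (∀ (x : G) (v w : H), (w : V) = π x (v : V) → ((T w : V)) = π x ((T v : V))) → T = 0)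
    (w : V) (hw : w ∈ H) (w' : V) (hw' : w' ∈ H') (u u' : V) :
    ∫ x, ⟪w, π x u⟫ * ⟪π x u', w'⟫ ∂μ = 0 :=
  averaged_rank_one_operator_inequivalent_eq_zero_general μ π hcont H H' hHclosed hH'closed hHinv
    hH'inv hineq w hw w' hw' u u'
end

section
/- For all integers n, j with n ≥ 3 and 1 ≤ j ≤ n−2 there exists a constant C > 0 such that for all integers p ≥ 0 and q ≥ 1, 1 − ε(n,j,p,q) ≤ C · (2+p)(2+q)/(2+p+q)². -/
/-!
Write `s = p + q + n`. After regrouping, the first summand of `ε` is a product of three ratios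
bounded below by `1`, `q / s`, `q / s`, and the second by `p / s`, `p / (p + 1)`, `p / s`; since
`p³ / (p + 1) ≥ p² - p`, this gives `ε ≥ (q² + p² - p) / s²`. The defect
`s² - p² - q² + p = 2pq + 2n(p + q) + n² + p` is at most `(n² + 1)(2 + p)(2 + q)`, and
`s ≥ 2 + p + q`, which gives the bound with `C = n² + 1`.
-/

/-- The coefficient `ε^{ΦΦ}_{ppqqj}` by which `|⟨z,w⟩|²` multiplies the projection kernel
`K^Φ_{pqj}` back onto itself, for the sphere in `ℂⁿ`. -/
noncomputable def epsCoeff (n j p q : ℤ) : ℝ :=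
    ((q : ℝ) + 1 + (j : ℝ)) / ((p : ℝ) + (q : ℝ) + (n : ℝ))
      * ((q : ℝ) / ((q : ℝ) + (j : ℝ)))
      * (((q : ℝ) + (n : ℝ) - 1) / ((p : ℝ) + (q : ℝ) + (n : ℝ) - 1))
  + ((p : ℝ) + (n : ℝ) - 1) / ((p : ℝ) + (q : ℝ) + (n : ℝ) - 2)
      * (((p : ℝ) + (n : ℝ) - 2 - (j : ℝ)) / ((p : ℝ) + (n : ℝ) - 1 - (j : ℝ)))
      * ((p : ℝ) / ((p : ℝ) + (q : ℝ) + (n : ℝ) - 1))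

namespace EpsCoeff

noncomputable def fst (n j p q : ℝ) : ℝ :=
  (q + 1 + j) / (p + q + n) * (q / (q + j)) * ((q + n - 1) / (p + q + n - 1))

noncomputable def snd (n j p q : ℝ) : ℝ :=
  (p + n - 1) / (p + q + n - 2) * ((p + n - 2 - j) / (p + n - 1 - j)) * (p / (p + q + n - 1))

theorem epsCoeff_eq_fst_add_snd (n j p q : ℤ) :
    epsCoeff n j p q = fst n j p q + snd n j p q :=
  rfl

variable {n j p q : ℝ}

theorem sq_div_le_fst (hp : 0 ≤ p) (hq : 0 ≤ q) (hj : 0 < j) (hn : 1 < n) :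
    (q / (p + q + n)) ^ 2 ≤ fst n j p q := by
  have hs : 0 < p + q + n := by linarith
  have hs1 : 0 < p + q + n - 1 := by linarith
  have hqj : 0 < q + j := by linarith
  have one_le : 1 ≤ (q + 1 + j) / (q + j) := by rw [le_div_iff₀ hqj]; linarith
  have div_le : q / (p + q + n) ≤ (q + n - 1) / (p + q + n - 1) := by
    rw [div_le_div_iff₀ hs hs1]; nlinarith
  calc (q / (p + q + n)) ^ 2 = 1 * (q / (p + q + n)) * (q / (p + q + n)) := by ring
    _ ≤ (q + 1 + j) / (q + j) * (q / (p + q + n)) * ((q + n - 1) / (p + q + n - 1)) := by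
      gcongr
    _ = fst n j p q := by unfold fst; ring

theorem sq_div_sub_le_snd (hp : 0 ≤ p) (hq : 0 ≤ q) (hn : 2 < n) (hj : j ≤ n - 2) :
    (p / (p + q + n)) ^ 2 - p / (p + q + n) ^ 2 ≤ snd n j p q := by
  have hs : 0 < p + q + n := by linarith
  have hs1 : 0 < p + q + n - 1 := by linarith
  have hs2 : 0 < p + q + n - 2 := by linarith
  have hpj : 0 < p + n - 1 - j := by linarith
  have first : p / (p + q + n) ≤ (p + n - 1) / (p + q + n - 2) := by
    rw [div_le_div_iff₀ hs hs2]; nlinarith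
  have second : p / (p + 1) ≤ (p + n - 2 - j) / (p + n - 1 - j) := by
    rw [div_le_div_iff₀ (by linarith) hpj]; nlinarith
  have third : p / (p + q + n) ≤ p / (p + q + n - 1) :=
    div_le_div_of_nonneg_left hp hs1 (by linarith)
  have cube : (p / (p + q + n)) ^ 2 - p / (p + q + n) ^ 2
      ≤ p / (p + q + n) * (p / (p + 1)) * (p / (p + q + n)) := by
    rw [div_pow, ← sub_div, div_mul_div_comm, div_mul_div_comm,
      div_le_div_iff₀ (by positivity) (by positivity)]
    nlinarith [sq_nonneg (p + q + n)]
  have hfirst : 0 ≤ (p + n - 1) / (p + q + n - 2) := div_nonneg (by linarith) hs2.le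
  have hsecond : 0 ≤ (p + n - 2 - j) / (p + n - 1 - j) := div_nonneg (by linarith) hpj.le
  calc _ ≤ p / (p + q + n) * (p / (p + 1)) * (p / (p + q + n)) := cube
    _ ≤ snd n j p q :=
      mul_le_mul (mul_le_mul first second (by positivity) hfirst) third (by positivity)
        (mul_nonneg hfirst hsecond)

theorem one_sub_sq_div_le (hp : 0 ≤ p) (hq : 0 ≤ q) (hn : 2 ≤ n) :
    1 - (q / (p + q + n)) ^ 2 - ((p / (p + q + n)) ^ 2 - p / (p + q + n) ^ 2)
      ≤ (n ^ 2 + 1) * ((2 + p) * (2 + q) / (2 + p + q) ^ 2) := by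
  have hs : 0 < p + q + n := by linarith
  have defect : 1 - (q / (p + q + n)) ^ 2 - ((p / (p + q + n)) ^ 2 - p / (p + q + n) ^ 2)
      = (2 * p * q + 2 * n * (p + q) + n ^ 2 + p) / (p + q + n) ^ 2 := by
    field_simp; ring
  rw [defect, mul_div_assoc']
  calc _ ≤ (2 * p * q + 2 * n * (p + q) + n ^ 2 + p) / (2 + p + q) ^ 2 := by
        apply div_le_div_of_nonneg_left (by positivity) (by positivity)
        exact pow_le_pow_left₀ (by positivity) (by linarith) 2
    _ ≤ _ := by
        gcongr
        nlinarith [mul_nonneg hp hq, mul_nonneg (mul_nonneg hp hq) (sq_nonneg n),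
          mul_nonneg hp (sq_nonneg (n - 1)), mul_nonneg hq (sq_nonneg (n - 1))]

end EpsCoeff

open EpsCoeff in
/-- For all integers `n ≥ 3` and `1 ≤ j ≤ n-2` there is a constant `C > 0` such that for all
integers `p ≥ 0` and `q ≥ 1`, `1 - ε(n,j,p,q) ≤ C · (2+p)(2+q)/(2+p+q)²`. -/
theorem one_sub_epsCoeff_le (n j : ℤ) (hn : 3 ≤ n) (hj1 : 1 ≤ j) (hj2 : j ≤ n - 2) :
    ∃ C : ℝ, 0 < C ∧ ∀ p q : ℤ, 0 ≤ p → 1 ≤ q →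
      1 - epsCoeff n j p q
        ≤ C * ((2 + (p : ℝ)) * (2 + (q : ℝ)) / (2 + (p : ℝ) + (q : ℝ)) ^ 2) := by
  refine ⟨(n : ℝ) ^ 2 + 1, by positivity, fun p q hp hq => ?_⟩
  have hn' : (3 : ℝ) ≤ n := by exact_mod_cast hn
  have hj1' : (1 : ℝ) ≤ j := by exact_mod_cast hj1
  have hj2' : (j : ℝ) ≤ n - 2 := by exact_mod_cast hj2
  have hp' : (0 : ℝ) ≤ p := by exact_mod_cast hp
  have hq0 : (0 : ℝ) ≤ q := by exact_mod_cast zero_le_one.trans hq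
  rw [epsCoeff_eq_fst_add_snd]
  linarith [sq_div_le_fst (n := n) (j := j) hp' hq0 (by linarith) (by linarith),
    sq_div_sub_le_snd hp' hq0 (by linarith) hj2', one_sub_sq_div_le (n := n) hp' hq0 (by linarith)]
end

section
/- Let n ≥ 2 be an integer and let θ be a real number with 0 ≤ θ < 1/2. Then there exists a constant C > 0 such that for every integer i ≥ 2, ∑ (p·q)^{n−2+θ} · (p+q)^{1−2θ} ≤ C · i^{2(n−θ)−1}, where the sum ranges over all pairs of integers (p, q) with p ≥ 1, q ≥ 1 and (i−1)² ≤ 2pq ≤ i². -/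
/-!
Write `α = n - 2 + θ ≥ 0`, `β = 1 - 2θ > 0` and call `(i-1)² ≤ 2pq ≤ i²` the shell.
By symmetry in `p, q` it suffices to sum over `p ≤ q`. For such pairs `2pq ≤ i²` gives
`pq ≤ i²` and `p + q ≤ 2q ≤ i²/p`, so each term `(pq)^α (p+q)^β` is at most `i^(2α+2β) p^(-β)`;
for fixed `p` the admissible `q` fill an interval of length `(2i-1)/(2p)` and `p ≤ i`, so there
are at most `2i/p` of them. The total is therefore at most `4 i^(2α+2β+1) ∑ p^(-β-1)`, and this
series converges because `β > 0`.
-/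

open Finset

theorem Finset.sum_sum_le_two_nsmul_sum_sum_filter_le {α M : Type*} [LinearOrder α]
    [AddCommMonoid M] [PartialOrder M] [IsOrderedAddMonoid M] (s : Finset α) (f : α → α → M)
    (hf : ∀ a b, f a b = f b a) (h0 : ∀ a b, 0 ≤ f a b) :
    ∑ a ∈ s, ∑ b ∈ s, f a b ≤ 2 • ∑ a ∈ s, ∑ b ∈ s with a ≤ b, f a b := by
  calc ∑ a ∈ s, ∑ b ∈ s, f a b
      = ∑ a ∈ s, (∑ b ∈ s with a ≤ b, f a b + ∑ b ∈ s with ¬a ≤ b, f a b) := by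
        simp only [sum_filter_add_sum_filter_not]
    _ ≤ ∑ a ∈ s, (∑ b ∈ s with a ≤ b, f a b + ∑ b ∈ s with b ≤ a, f a b) := by
        gcongr with a
        · exact fun b _ _ => h0 a b
        · exact le_of_not_ge
    _ = ∑ a ∈ s, ∑ b ∈ s with a ≤ b, f a b + ∑ a ∈ s, ∑ b ∈ s with a ≤ b, f a b := by
        rw [sum_add_distrib]
        congr 1
        rw [sum_comm' (t' := s) (s' := fun b => {a ∈ s | b ≤ a})
          fun a b => by simp only [mem_filter]; tauto]
        exact sum_congr rfl fun b _ => sum_congr rfl fun a _ => hf a b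
    _ = 2 • ∑ a ∈ s, ∑ b ∈ s with a ≤ b, f a b := (two_nsmul _).symm

theorem card_filter_natCast_mem_Icc_le (s : Finset ℕ) {x y : ℝ} (hxy : x ≤ y + 1) :
    (#(s.filter fun q : ℕ => x ≤ (q : ℝ) ∧ (q : ℝ) ≤ y) : ℝ) ≤ y - x + 1 := by
  rcases (s.filter fun q : ℕ => x ≤ q ∧ (q : ℝ) ≤ y).eq_empty_or_nonempty with h | ⟨q, hq⟩
  · simp only [h, card_empty, Nat.cast_zero]
    linarith
  have hsub : (s.filter fun q : ℕ => x ≤ (q : ℝ) ∧ (q : ℝ) ≤ y) ⊆ Icc ⌈x⌉₊ ⌊y⌋₊ := fun q hq => by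
    rw [mem_filter] at hq
    exact mem_Icc.2 ⟨Nat.ceil_le.2 hq.2.1, Nat.le_floor hq.2.2⟩
  have hq' := mem_Icc.1 (hsub hq)
  have hy : 0 ≤ y := (Nat.cast_nonneg q).trans (mem_filter.1 hq).2.2
  calc (#(s.filter fun q : ℕ => x ≤ (q : ℝ) ∧ (q : ℝ) ≤ y) : ℝ) ≤ #(Icc ⌈x⌉₊ ⌊y⌋₊) := by
        exact_mod_cast card_le_card hsub
    _ = (⌊y⌋₊ : ℝ) + 1 - ⌈x⌉₊ := by
        rw [Nat.card_Icc, Nat.cast_sub (by omega)]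
        push_cast
        ring
    _ ≤ y - x + 1 := by linarith [Nat.floor_le hy, Nat.le_ceil x]

theorem rpow_mul_mul_add_rpow_le {p q N α β : ℝ} (hp : 0 < p) (hpq : p ≤ q) (hN : 2 * p * q ≤ N)
    (hα : 0 ≤ α) (hβ : 0 ≤ β) : (p * q) ^ α * (p + q) ^ β ≤ N ^ α * (N / p) ^ β := by
  have hq : 0 < q := hp.trans_le hpq
  have hpq_le : p * q ≤ N := by nlinarith
  have hN0 : 0 ≤ N := by nlinarith
  have hadd_le : p + q ≤ N / p := by
    rw [le_div_iff₀ hp]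
    nlinarith
  exact mul_le_mul (Real.rpow_le_rpow (by positivity) hpq_le hα)
    (Real.rpow_le_rpow (by positivity) hadd_le hβ) (by positivity) (by positivity)

theorem card_filter_shell_le (s : Finset ℕ) {i p : ℕ} (hi : 1 ≤ i) (hp : 0 < p) :
    (#{q ∈ s | p ≤ q ∧ (i - 1) ^ 2 ≤ 2 * p * q ∧ 2 * p * q ≤ i ^ 2} : ℝ) ≤ 2 * i / p := by
  rcases
    (s.filter fun q => p ≤ q ∧ (i - 1) ^ 2 ≤ 2 * p * q ∧ 2 * p * q ≤ i ^ 2).eq_empty_or_nonempty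
    with h | ⟨q₀, hq₀⟩
  · rw [h, card_empty, Nat.cast_zero]
    positivity
  have hpi : p ≤ i := by
    obtain ⟨-, hpq₀, -, hq₀i⟩ := mem_filter.1 hq₀
    nlinarith
  have hp' : (0 : ℝ) < p := by exact_mod_cast hp
  have hpi' : (p : ℝ) ≤ i := by exact_mod_cast hpi
  have hi' : (1 : ℝ) ≤ i := by exact_mod_cast hi
  have hsub : {q ∈ s | p ≤ q ∧ (i - 1) ^ 2 ≤ 2 * p * q ∧ 2 * p * q ≤ i ^ 2} ⊆
      s.filter fun q : ℕ => ((i : ℝ) - 1) ^ 2 / (2 * p) ≤ q ∧ (q : ℝ) ≤ (i : ℝ) ^ 2 / (2 * p) := by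
    intro q hq
    obtain ⟨hqs, -, hlo, hhi⟩ := mem_filter.1 hq
    have hlo' : (((i - 1 : ℕ) : ℝ)) ^ 2 ≤ 2 * p * q := by exact_mod_cast hlo
    have hhi' : (2 * p * q : ℝ) ≤ (i : ℝ) ^ 2 := by exact_mod_cast hhi
    rw [Nat.cast_sub hi, Nat.cast_one] at hlo'
    refine mem_filter.2 ⟨hqs, ?_, ?_⟩
    · rw [div_le_iff₀ (by positivity)]; linarith
    · rw [le_div_iff₀ (by positivity)]; linarith
  calc (#{q ∈ s | p ≤ q ∧ (i - 1) ^ 2 ≤ 2 * p * q ∧ 2 * p * q ≤ i ^ 2} : ℝ)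
      ≤ (i : ℝ) ^ 2 / (2 * p) - ((i : ℝ) - 1) ^ 2 / (2 * p) + 1 :=
        (Nat.cast_le.2 (card_le_card hsub)).trans <| card_filter_natCast_mem_Icc_le s <| by
          have hsq : ((i : ℝ) - 1) ^ 2 ≤ (i : ℝ) ^ 2 := by nlinarith
          linarith [div_le_div_of_nonneg_right hsq (by positivity : (0 : ℝ) ≤ 2 * p)]
    _ = (2 * i - 1) / (2 * p) + 1 := by ring
    _ ≤ 2 * i / p := by
      rw [div_add_one (by positivity), div_le_div_iff₀ (by positivity) hp']
      nlinarith

theorem sum_filter_shell_le {α β : ℝ} (hα : 0 ≤ α) (hβ : 0 ≤ β) (s : Finset ℕ) {i p : ℕ}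
    (hi : 1 ≤ i) (hp : 0 < p) :
    ∑ q ∈ s with p ≤ q ∧ (i - 1) ^ 2 ≤ 2 * p * q ∧ 2 * p * q ≤ i ^ 2,
        ((p : ℝ) * q) ^ α * ((p : ℝ) + q) ^ β
      ≤ 2 * (i : ℝ) ^ (2 * α + 2 * β + 1) * (p : ℝ) ^ (-β - 1) := by
  have hp' : (0 : ℝ) < p := by exact_mod_cast hp
  have hi' : (0 : ℝ) < i := by exact_mod_cast hi
  have hterm : ∀ q ∈ s.filter fun q => p ≤ q ∧ (i - 1) ^ 2 ≤ 2 * p * q ∧ 2 * p * q ≤ i ^ 2,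
      ((p : ℝ) * q) ^ α * ((p : ℝ) + q) ^ β ≤ ((i : ℝ) ^ 2) ^ α * ((i : ℝ) ^ 2 / p) ^ β := by
    intro q hq
    obtain ⟨-, hpq, -, hqi⟩ := mem_filter.1 hq
    exact rpow_mul_mul_add_rpow_le hp' (by exact_mod_cast hpq) (by exact_mod_cast hqi) hα hβ
  calc _ ≤ _ := sum_le_card_nsmul _ _ _ hterm
    _ ≤ (2 * i / p) * (((i : ℝ) ^ 2) ^ α * ((i : ℝ) ^ 2 / p) ^ β) := by
      rw [nsmul_eq_mul]
      gcongr
      exact card_filter_shell_le s hi hp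
    _ = 2 * (i : ℝ) ^ (2 * α + 2 * β + 1) * (p : ℝ) ^ (-β - 1) := by
      rw [Real.div_rpow (by positivity) hp'.le, Real.rpow_add hi', Real.rpow_add hi',
        Real.rpow_sub hp', Real.rpow_neg hp'.le, Real.rpow_one, Real.rpow_one,
        ← Real.rpow_natCast_mul hi'.le, ← Real.rpow_natCast_mul hi'.le]
      push_cast
      field_simp

theorem exists_sum_shell_le {α β : ℝ} (hα : 0 ≤ α) (hβ : 0 < β) :
    ∃ C : ℝ, 0 < C ∧ ∀ N i : ℕ, 1 ≤ i →
      ∑ pq ∈ (Icc 1 N ×ˢ Icc 1 N).filter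
          (fun pq => (i - 1) ^ 2 ≤ 2 * pq.1 * pq.2 ∧ 2 * pq.1 * pq.2 ≤ i ^ 2),
        ((pq.1 : ℝ) * pq.2) ^ α * ((pq.1 : ℝ) + pq.2) ^ β
      ≤ C * (i : ℝ) ^ (2 * α + 2 * β + 1) := by
  have hsum : Summable fun p : ℕ => (p : ℝ) ^ (-β - 1) := Real.summable_nat_rpow.2 (by linarith)
  have hnonneg : ∀ p : ℕ, 0 ≤ (p : ℝ) ^ (-β - 1) := fun p => by positivity
  refine ⟨4 * ∑' p : ℕ, (p : ℝ) ^ (-β - 1),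
    mul_pos four_pos (hsum.tsum_pos hnonneg 1 (by simp)), fun N i hi => ?_⟩
  set F : ℕ → ℕ → ℝ := fun p q => if (i - 1) ^ 2 ≤ 2 * p * q ∧ 2 * p * q ≤ i ^ 2 then
    ((p : ℝ) * q) ^ α * ((p : ℝ) + q) ^ β else 0 with hF
  have hF_symm : ∀ p q, F p q = F q p := fun p q => by
    simp only [hF, mul_right_comm 2 p q, mul_comm (p : ℝ), add_comm (p : ℝ)]
  have hF_nonneg : ∀ p q, 0 ≤ F p q := fun p q => by
    simp only [hF]; split_ifs <;> positivity
  calc _ = ∑ p ∈ Icc 1 N, ∑ q ∈ Icc 1 N, F p q := by rw [sum_filter, sum_product]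
    _ ≤ 2 • ∑ p ∈ Icc 1 N, ∑ q ∈ Icc 1 N with p ≤ q, F p q :=
      sum_sum_le_two_nsmul_sum_sum_filter_le _ F hF_symm hF_nonneg
    _ = 2 * ∑ p ∈ Icc 1 N, ∑ q ∈ Icc 1 N with p ≤ q ∧ (i - 1) ^ 2 ≤ 2 * p * q ∧ 2 * p * q ≤ i ^ 2,
          ((p : ℝ) * q) ^ α * ((p : ℝ) + q) ^ β := by
      simp only [hF, ← sum_filter, filter_filter, nsmul_eq_mul, Nat.cast_ofNat]
    _ ≤ 2 * ∑ p ∈ Icc 1 N, 2 * (i : ℝ) ^ (2 * α + 2 * β + 1) * (p : ℝ) ^ (-β - 1) := by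
      gcongr with p hp
      exact sum_filter_shell_le hα hβ.le _ hi (mem_Icc.1 hp).1
    _ = 4 * (i : ℝ) ^ (2 * α + 2 * β + 1) * ∑ p ∈ Icc 1 N, (p : ℝ) ^ (-β - 1) := by
      rw [← mul_sum]; ring
    _ ≤ _ := by
      rw [mul_right_comm]
      gcongr
      exact hsum.sum_le_tsum _ fun p _ => hnonneg p

/-- For `n ≥ 2` and `0 ≤ θ < 1/2` there is a constant `C > 0` such that for every integer
`i ≥ 2`, `∑ (pq)^{n-2+θ} (p+q)^{1-2θ} ≤ C i^{2(n-θ)-1}`, the sum being over all pairs of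
integers `p, q ≥ 1` with `(i-1)² ≤ 2pq ≤ i²`. -/
theorem hyperbolic_sum_power_bound (n : ℕ) (hn : 2 ≤ n) (θ : ℝ) (hθ0 : 0 ≤ θ)
    (hθ1 : θ < 1 / 2) :
    ∃ C : ℝ, 0 < C ∧ ∀ i : ℕ, 2 ≤ i →
      ∑ pq ∈ (Finset.Icc 1 (i ^ 2) ×ˢ Finset.Icc 1 (i ^ 2)).filter
          (fun pq => (i - 1) ^ 2 ≤ 2 * pq.1 * pq.2 ∧ 2 * pq.1 * pq.2 ≤ i ^ 2),
        ((pq.1 : ℝ) * (pq.2 : ℝ)) ^ ((n : ℝ) - 2 + θ)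
          * ((pq.1 : ℝ) + (pq.2 : ℝ)) ^ (1 - 2 * θ)
      ≤ C * (i : ℝ) ^ (2 * ((n : ℝ) - θ) - 1) := by
  have hn' : (2 : ℝ) ≤ n := by exact_mod_cast hn
  obtain ⟨C, hC, hbound⟩ :=
    exists_sum_shell_le (α := (n : ℝ) - 2 + θ) (β := 1 - 2 * θ) (by linarith) (by linarith)
  refine ⟨C, hC, fun i hi => ?_⟩
  convert hbound (i ^ 2) i (by omega) using 3
  ring
end

section
/- Let θ be a real number with 0 ≤ θ < 1/2. Then there exists a constant C > 0 such that for every integer i ≥ 2, ∑ ((p+q)/(p·q))^{1−2θ} ≤ C · i, where the sum ranges over all pairs of integers (p, q) with p ≥ 1, q ≥ 1 and (i−1)² ≤ 2pq ≤ i². -/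
/-! By symmetry it suffices to sum over `p ≤ q`, where `(p + q) / (p q) ≤ 2 / p` and `p ≤ i`.
For fixed `p` the admissible `q` lie in `[(i - 1)² / (2p), i² / (2p)]`, an interval of length
`(2i - 1) / (2p) < i / p`, so there are at most `i / p + 1` of them. With `α = 1 - 2θ > 0` the sum
is therefore at most `2 ∑_{p ≤ i} (i / p + 1) (2 / p)^α ≤ 2^{α+1} (i ∑ p^{-(1+α)} + i)`, and
`∑ p^{-(1+α)}` converges. -/

open Finset

lemma Finset.card_le_of_forall_natCast_mem_Icc {s : Finset ℕ} {x y : ℝ} (hxy : x ≤ y)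
    (hs : ∀ n ∈ s, (n : ℝ) ∈ Set.Icc x y) : (#s : ℝ) ≤ y - x + 1 := by
  rcases s.eq_empty_or_nonempty with rfl | hne
  · simp only [card_empty, CharP.cast_eq_zero]; linarith
  have hsub : s ⊆ Icc (s.min' hne) (s.max' hne) := fun n hn =>
    mem_Icc.2 ⟨s.min'_le n hn, s.le_max' n hn⟩
  have hcard : #s ≤ s.max' hne + 1 - s.min' hne := (card_le_card hsub).trans (Nat.card_Icc _ _).le
  have hle : s.min' hne ≤ s.max' hne := s.min'_le_max' hne
  have hmin := (hs _ (s.min'_mem hne)).1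
  have hmax := (hs _ (s.max'_mem hne)).2
  calc (#s : ℝ) ≤ ((s.max' hne + 1 - s.min' hne : ℕ) : ℝ) := by exact_mod_cast hcard
    _ = s.max' hne + 1 - s.min' hne := by rw [Nat.cast_sub (by omega)]; push_cast; ring
    _ ≤ y - x + 1 := by linarith

lemma Finset.sum_le_two_mul_sum_filter_fst_le {α : Type*} [LinearOrder α] (s : Finset (α × α))
    (hs : ∀ x ∈ s, x.swap ∈ s) {f : α × α → ℝ} (hf : ∀ x, f x.swap = f x)
    (hf0 : ∀ x ∈ s, 0 ≤ f x) :
    ∑ x ∈ s, f x ≤ 2 * ∑ x ∈ s with x.1 ≤ x.2, f x := by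
  have hswap : ∑ x ∈ s with x.2 ≤ x.1, f x = ∑ x ∈ s with x.1 ≤ x.2, f x := by
    refine sum_nbij' Prod.swap Prod.swap ?_ ?_ (fun x _ => x.swap_swap) (fun x _ => x.swap_swap)
      (fun x _ => (hf x).symm) <;>
    · intro x hx
      simp only [mem_filter, Prod.fst_swap, Prod.snd_swap] at hx ⊢
      exact ⟨hs x hx.1, hx.2⟩
  have hlt : ∑ x ∈ s with ¬ x.1 ≤ x.2, f x ≤ ∑ x ∈ s with x.2 ≤ x.1, f x :=
    sum_le_sum_of_subset_of_nonneg (monotone_filter_right s fun x _ h => le_of_not_ge h)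
      fun x hx _ => hf0 x (mem_filter.1 hx).1
  linarith [sum_filter_add_sum_filter_not s (fun x : α × α => x.1 ≤ x.2) f]

lemma Finset.sum_comp_le_sum_mul_of_card_fiber_le {ι κ : Type*} [DecidableEq κ] {s : Finset ι}
    {t : Finset κ} {π : ι → κ} (hπ : ∀ x ∈ s, π x ∈ t) {g c : κ → ℝ} (hg : ∀ j ∈ t, 0 ≤ g j)
    (hc : ∀ j ∈ t, (#{x ∈ s | π x = j} : ℝ) ≤ c j) :
    ∑ x ∈ s, g (π x) ≤ ∑ j ∈ t, c j * g j := by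
  rw [← sum_fiberwise_of_maps_to' hπ]
  refine sum_le_sum fun j hj => ?_
  rw [sum_const, nsmul_eq_mul]
  exact mul_le_mul_of_nonneg_right (hc j hj) (hg j hj)

lemma add_div_mul_le_two_div {p q : ℝ} (hp : 0 < p) (hpq : p ≤ q) : (p + q) / (p * q) ≤ 2 / p := by
  rw [div_le_div_iff₀ (mul_pos hp (hp.trans_le hpq)) hp]
  nlinarith

lemma sum_Icc_mul_two_div_rpow_le {α : ℝ} (hα : 0 < α) (i : ℕ) :
    ∑ p ∈ Icc 1 i, ((i : ℝ) / p + 1) * (2 / p) ^ α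
      ≤ 2 ^ α * (∑' n : ℕ, (n : ℝ) ^ (-(1 + α)) + 1) * i := by
  have hterm : ∀ p ∈ Icc 1 i,
      ((i : ℝ) / p + 1) * (2 / p) ^ α ≤ 2 ^ α * (i * (p : ℝ) ^ (-(1 + α)) + 1) := by
    intro p hp
    have hp1 : (1 : ℝ) ≤ p := by exact_mod_cast (mem_Icc.1 hp).1
    have hp0 : (0 : ℝ) < p := by linarith
    have hpα : (p : ℝ) ^ (-α) ≤ 1 := Real.rpow_le_one_of_one_le_of_nonpos hp1 (by linarith)
    have hsplit : (p : ℝ) ^ (-(1 + α)) = (p : ℝ)⁻¹ * p ^ (-α) := by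
      rw [neg_add, Real.rpow_add hp0, Real.rpow_neg_one]
    rw [Real.div_rpow zero_le_two hp0.le, div_eq_mul_inv _ ((p : ℝ) ^ α), ← Real.rpow_neg hp0.le,
      hsplit, div_eq_mul_inv]
    have h2α : (0 : ℝ) < 2 ^ α := by positivity
    nlinarith [mul_le_mul_of_nonneg_left hpα h2α.le]
  have hsummable : Summable fun n : ℕ => (n : ℝ) ^ (-(1 + α)) :=
    Real.summable_nat_rpow.2 (by linarith)
  have hpartial : ∑ p ∈ Icc 1 i, (p : ℝ) ^ (-(1 + α)) ≤ ∑' n : ℕ, (n : ℝ) ^ (-(1 + α)) :=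
    hsummable.sum_le_tsum _ fun n _ => Real.rpow_nonneg n.cast_nonneg _
  calc ∑ p ∈ Icc 1 i, ((i : ℝ) / p + 1) * (2 / p) ^ α
      ≤ ∑ p ∈ Icc 1 i, 2 ^ α * (i * (p : ℝ) ^ (-(1 + α)) + 1) := sum_le_sum hterm
    _ = 2 ^ α * (i * ∑ p ∈ Icc 1 i, (p : ℝ) ^ (-(1 + α)) + i) := by
      rw [← mul_sum, sum_add_distrib, ← mul_sum, sum_const, Nat.card_Icc, nsmul_one,
        Nat.add_sub_cancel]
    _ ≤ 2 ^ α * (∑' n : ℕ, (n : ℝ) ^ (-(1 + α)) + 1) * i := by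
      have : (0 : ℝ) ≤ i := i.cast_nonneg
      have h2α : (0 : ℝ) < 2 ^ α := by positivity
      nlinarith [mul_le_mul_of_nonneg_left hpartial this]

def hyperbolicBand (i : ℕ) : Finset (ℕ × ℕ) :=
  (Icc 1 (i ^ 2) ×ˢ Icc 1 (i ^ 2)).filter
    fun pq => (i - 1) ^ 2 ≤ 2 * pq.1 * pq.2 ∧ 2 * pq.1 * pq.2 ≤ i ^ 2

lemma swap_mem_hyperbolicBand {i : ℕ} {x : ℕ × ℕ} (hx : x ∈ hyperbolicBand i) :
    x.swap ∈ hyperbolicBand i := by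
  simp only [hyperbolicBand, mem_filter, mem_product, Prod.fst_swap, Prod.snd_swap] at hx ⊢
  rw [mul_right_comm 2 x.2]
  exact ⟨hx.1.symm, hx.2⟩

lemma fst_mem_Icc_of_mem_hyperbolicBand {i : ℕ} {x : ℕ × ℕ} (hx : x ∈ hyperbolicBand i)
    (hle : x.1 ≤ x.2) : x.1 ∈ Icc 1 i := by
  simp only [hyperbolicBand, mem_filter, mem_product, mem_Icc] at hx
  refine mem_Icc.2 ⟨hx.1.1.1, ?_⟩
  have : x.1 * x.1 ≤ i * i := by nlinarith
  exact Nat.mul_self_le_mul_self_iff.1 this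

lemma card_fiber_hyperbolicBand_le {i p : ℕ} (hi : 1 ≤ i) (hp : 1 ≤ p) :
    (#{x ∈ hyperbolicBand i | x.1 = p} : ℝ) ≤ i / p + 1 := by
  have hp0 : (0 : ℝ) < p := by exact_mod_cast hp
  have hinj :
      Set.InjOn Prod.snd (({x ∈ hyperbolicBand i | x.1 = p} : Finset _) : Set (ℕ × ℕ)) := by
    intro x hx y hy hxy
    simp only [coe_filter, Set.mem_ofPred_eq] at hx hy
    exact Prod.ext (hx.2.trans hy.2.symm) hxy
  rw [← card_image_of_injOn hinj]
  have hbounds : ∀ q ∈ {x ∈ hyperbolicBand i | x.1 = p}.image Prod.snd,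
      (q : ℝ) ∈ Set.Icc (((i : ℝ) - 1) ^ 2 / (2 * p)) ((i : ℝ) ^ 2 / (2 * p)) := by
    intro q hq
    obtain ⟨x, hx, rfl⟩ := mem_image.1 hq
    simp only [hyperbolicBand, mem_filter] at hx
    obtain ⟨⟨-, hlo, hhi⟩, rfl⟩ := hx
    have hlo' : ((i : ℝ) - 1) ^ 2 ≤ 2 * x.1 * x.2 := by
      rw [← Nat.cast_one, ← Nat.cast_sub hi]; exact_mod_cast hlo
    have hhi' : (2 * x.1 * x.2 : ℝ) ≤ (i : ℝ) ^ 2 := by exact_mod_cast hhi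
    constructor
    · rw [div_le_iff₀ (by positivity)]; linarith
    · rw [le_div_iff₀ (by positivity)]; linarith
  refine (card_le_of_forall_natCast_mem_Icc ?_ hbounds).trans ?_
  · gcongr <;> linarith [(Nat.one_le_cast (α := ℝ)).2 hi]
  · rw [← sub_div, div_add_one, div_add_one, div_le_div_iff₀] <;> first | positivity | nlinarith

theorem hyperbolic_sum_bound_general (θ : ℝ) (hθ1 : θ < 1 / 2) :
    ∃ C : ℝ, 0 < C ∧ ∀ i : ℕ, 2 ≤ i →
      ∑ pq ∈ (Finset.Icc 1 (i ^ 2) ×ˢ Finset.Icc 1 (i ^ 2)).filter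
          (fun pq => (i - 1) ^ 2 ≤ 2 * pq.1 * pq.2 ∧ 2 * pq.1 * pq.2 ≤ i ^ 2),
        (((pq.1 : ℝ) + (pq.2 : ℝ)) / ((pq.1 : ℝ) * (pq.2 : ℝ))) ^ (1 - 2 * θ)
      ≤ C * (i : ℝ) := by
  set α := 1 - 2 * θ
  have hα : 0 < α := by linarith
  refine ⟨2 * (2 ^ α * (∑' n : ℕ, (n : ℝ) ^ (-(1 + α)) + 1)), by positivity, fun i hi => ?_⟩
  change ∑ x ∈ hyperbolicBand i, _ ≤ _
  calc ∑ x ∈ hyperbolicBand i, (((x.1 : ℝ) + x.2) / (x.1 * x.2)) ^ α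
      ≤ 2 * ∑ x ∈ hyperbolicBand i with x.1 ≤ x.2, (((x.1 : ℝ) + x.2) / (x.1 * x.2)) ^ α :=
        sum_le_two_mul_sum_filter_fst_le _ (fun _ => swap_mem_hyperbolicBand)
          (fun x => by simp only [Prod.fst_swap, Prod.snd_swap, add_comm, mul_comm])
          fun x _ => by positivity
    _ ≤ 2 * ∑ x ∈ hyperbolicBand i with x.1 ≤ x.2, (2 / (x.1 : ℝ)) ^ α := by
        gcongr 2 * ∑ _ ∈ _, (?_ : ℝ) ^ α with x hx
        obtain ⟨hx, hle⟩ := mem_filter.1 hx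
        have hp : (0 : ℝ) < x.1 := by
          exact_mod_cast (mem_Icc.1 (fst_mem_Icc_of_mem_hyperbolicBand hx hle)).1
        exact add_div_mul_le_two_div hp (Nat.cast_le.2 hle)
    _ ≤ 2 * ∑ p ∈ Icc 1 i, ((i : ℝ) / p + 1) * (2 / p) ^ α := by
        gcongr
        refine sum_comp_le_sum_mul_of_card_fiber_le (π := Prod.fst)
          (g := fun p : ℕ => (2 / (p : ℝ)) ^ α) (fun x hx => ?_) (fun p _ => by positivity)
          fun p hp => ?_
        · exact fst_mem_Icc_of_mem_hyperbolicBand (mem_filter.1 hx).1 (mem_filter.1 hx).2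
        · refine le_trans ?_ (card_fiber_hyperbolicBand_le (by omega) (mem_Icc.1 hp).1)
          exact_mod_cast card_le_card (filter_subset_filter _ (filter_subset _ _))
    _ ≤ 2 * (2 ^ α * (∑' n : ℕ, (n : ℝ) ^ (-(1 + α)) + 1) * i) := by
        gcongr; exact sum_Icc_mul_two_div_rpow_le hα i
    _ = _ := by ring

/-- For `0 ≤ θ < 1/2` there is a constant `C > 0` such that for every integer `i ≥ 2`,
`∑ ((p+q)/(pq))^{1-2θ} ≤ C i`, the sum being over all pairs of integers `p, q ≥ 1`
with `(i-1)² ≤ 2pq ≤ i²`. -/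
theorem hyperbolic_sum_bound (θ : ℝ) (hθ0 : 0 ≤ θ) (hθ1 : θ < 1 / 2) :
    ∃ C : ℝ, 0 < C ∧ ∀ i : ℕ, 2 ≤ i →
      ∑ pq ∈ (Finset.Icc 1 (i ^ 2) ×ˢ Finset.Icc 1 (i ^ 2)).filter
          (fun pq => (i - 1) ^ 2 ≤ 2 * pq.1 * pq.2 ∧ 2 * pq.1 * pq.2 ≤ i ^ 2),
        (((pq.1 : ℝ) + (pq.2 : ℝ)) / ((pq.1 : ℝ) * (pq.2 : ℝ))) ^ (1 - 2 * θ)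
      ≤ C * (i : ℝ) :=
  hyperbolic_sum_bound_general θ hθ1
end

section
/- There exist constants c, C > 0 such that for every integer i ≥ 2, c · i · log i ≤ card{(p, q) ∈ ℤ² : p ≥ 1, q ≥ 1, (i−1)² ≤ 2pq ≤ i²} ≤ C · i · log i; that is, the number of integer points lying between the two hyperbolae 2pq = (i−1)² and 2pq = i² in the positive quadrant is of the order of i·log i. -/
/-!
For fixed `p ≥ 1` the admissible `q` are the integers in the half-open interval
`(((i - 1)² - 1) / 2p, i² / 2p]`, of length `i / p`, so there are `i / p ± 1` of them.
Summing `i / p - 1 ≥ i / 2p` over `p ≤ i / 2` gives `(i / 2) H_{i/2} ≥ (i log i) / 4`.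
Conversely `2pq ≤ i²` forces `min p q ≤ i`, so by the symmetry `(p, q) ↦ (q, p)` the count is
at most twice the sum of `i / p + 1` over `p ≤ i`, that is `2 i (H_i + 1) ≤ 2 i (2 + log i)`.
-/
open Finset Real

section Floor

variable {k : Type*} [Field k] [LinearOrder k] [IsOrderedRing k] [FloorRing k]

theorem Int.ediv_eq_floor_div (a : ℤ) {d : ℤ} (hd : 0 ≤ d) : a / d = ⌊(a : k) / d⌋ := by
  rw [Int.floor_div_cast_of_nonneg hd, Int.floor_intCast]

theorem sub_sub_one_lt_card_Ioc_floor (x y : k) : y - x - 1 < #(Ioc ⌊x⌋ ⌊y⌋) := by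
  rw [Int.card_Ioc]
  calc y - x - 1 < (⌊y⌋ - ⌊x⌋ : ℤ) := by
        push_cast; linarith [Int.sub_one_lt_floor y, Int.floor_le x]
    _ ≤ ((⌊y⌋ - ⌊x⌋).toNat : ℤ) := by exact_mod_cast Int.self_le_toNat _
    _ = _ := by norm_cast

theorem card_Ioc_floor_lt_sub_add_one {x y : k} (hxy : x ≤ y) :
    (#(Ioc ⌊x⌋ ⌊y⌋) : k) < y - x + 1 := by
  rw [Int.card_Ioc]
  have hfloor : ((⌊y⌋ - ⌊x⌋).toNat : ℤ) = ⌊y⌋ - ⌊x⌋ :=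
    Int.toNat_of_nonneg (sub_nonneg.mpr (Int.floor_mono hxy))
  calc (((⌊y⌋ - ⌊x⌋).toNat : ℕ) : k) = ((⌊y⌋ - ⌊x⌋ : ℤ) : k) := by
        rw [← hfloor]; norm_cast
    _ < y - x + 1 := by push_cast; linarith [Int.lt_floor_add_one x, Int.floor_le y]

end Floor

theorem Finset.card_filter_product {α β : Type*} (s : Finset α) (t : Finset β)
    (P : α × β → Prop) [DecidablePred P] :
    #{x ∈ s ×ˢ t | P x} = ∑ a ∈ s, #{b ∈ t | P (a, b)} := by
  simp only [card_filter, sum_product]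

theorem sum_Icc_natCast_inv_eq_harmonic (n : ℕ) :
    ∑ p ∈ Icc (1 : ℤ) n, (p : ℝ)⁻¹ = harmonic n := by
  rw [harmonic_eq_sum_Icc]
  push_cast
  refine sum_nbij' Int.toNat Nat.cast (fun p hp => ?_) (fun p hp => ?_) (fun p hp => ?_)
    (fun p _ => Int.toNat_natCast p) (fun p hp => ?_)
  all_goals simp only [mem_Icc] at hp ⊢
  · omega
  · omega
  · omega
  · rw [← Int.cast_natCast, Int.toNat_of_nonneg (by omega)]

theorem log_add_one_le_sum_Icc_inv {m : ℤ} (hm : 0 ≤ m) :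
    log (m + 1) ≤ ∑ p ∈ Icc 1 m, (p : ℝ)⁻¹ := by
  lift m to ℕ using hm
  rw [sum_Icc_natCast_inv_eq_harmonic]
  exact_mod_cast log_add_one_le_harmonic m

theorem sum_Icc_inv_le_one_add_log {m : ℤ} (hm : 0 ≤ m) :
    ∑ p ∈ Icc 1 m, (p : ℝ)⁻¹ ≤ 1 + log m := by
  lift m to ℕ using hm
  rw [sum_Icc_natCast_inv_eq_harmonic]
  exact_mod_cast harmonic_le_one_add_log m

noncomputable def hyperbolaStrip (i N : ℤ) : Finset (ℤ × ℤ) :=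
  {pq ∈ Icc 1 N ×ˢ Icc 1 (i ^ 2) | (i - 1) ^ 2 ≤ 2 * pq.1 * pq.2 ∧ 2 * pq.1 * pq.2 ≤ i ^ 2}

noncomputable def hyperbolaFibre (i p : ℤ) : Finset ℤ :=
  Ioc (((i - 1) ^ 2 - 1) / (2 * p)) (i ^ 2 / (2 * p))

section Hyperbola

variable {i : ℤ}

theorem coe_hyperbolaStrip_sq :
    {pq : ℤ × ℤ | 1 ≤ pq.1 ∧ 1 ≤ pq.2 ∧
      (i - 1) ^ 2 ≤ 2 * pq.1 * pq.2 ∧ 2 * pq.1 * pq.2 ≤ i ^ 2} = hyperbolaStrip i (i ^ 2) := by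
  ext ⟨p, q⟩
  simp only [hyperbolaStrip, coe_filter, mem_product, mem_Icc, Set.mem_ofPred_eq]
  constructor
  · rintro ⟨hp, hq, hlow, hup⟩
    exact ⟨⟨⟨hp, by nlinarith⟩, hq, by nlinarith⟩, hlow, hup⟩
  · rintro ⟨⟨⟨hp, -⟩, hq, -⟩, hlow, hup⟩
    exact ⟨hp, hq, hlow, hup⟩

theorem filter_Icc_eq_hyperbolaFibre (hi : 2 ≤ i) {p : ℤ} (hp : 1 ≤ p) :
    {q ∈ Icc 1 (i ^ 2) | (i - 1) ^ 2 ≤ 2 * p * q ∧ 2 * p * q ≤ i ^ 2} = hyperbolaFibre i p := by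
  have h2p : 0 < 2 * p := by omega
  ext q
  simp only [hyperbolaFibre, mem_filter, mem_Icc, mem_Ioc, Int.ediv_lt_iff_lt_mul h2p,
    Int.le_ediv_iff_mul_le h2p]
  constructor
  · rintro ⟨-, hlow, hup⟩
    constructor <;> linarith
  · rintro ⟨hlow, hup⟩
    have hq : 1 ≤ q := by nlinarith
    exact ⟨⟨hq, by nlinarith⟩, by linarith, by linarith⟩

theorem card_hyperbolaStrip (hi : 2 ≤ i) (N : ℤ) :
    #(hyperbolaStrip i N) = ∑ p ∈ Icc 1 N, #(hyperbolaFibre i p) := by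
  rw [hyperbolaStrip, card_filter_product]
  exact sum_congr rfl fun p hp => congrArg card (filter_Icc_eq_hyperbolaFibre hi (mem_Icc.mp hp).1)

theorem card_hyperbolaStrip_sq_le (hi : 0 ≤ i) :
    #(hyperbolaStrip i (i ^ 2)) ≤ 2 * #(hyperbolaStrip i i) := by
  calc #(hyperbolaStrip i (i ^ 2))
      ≤ #(hyperbolaStrip i i ∪ (hyperbolaStrip i i).image Prod.swap) := by
        refine card_le_card fun ⟨p, q⟩ h => ?_
        simp only [hyperbolaStrip, mem_union, mem_image, mem_filter, mem_product, mem_Icc,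
          Prod.exists, Prod.swap_prod_mk, Prod.mk.injEq] at h ⊢
        obtain ⟨⟨⟨hp, -⟩, hq, -⟩, hlow, hup⟩ := h
        by_cases hpi : p ≤ i
        · exact .inl ⟨⟨⟨hp, hpi⟩, hq, by nlinarith⟩, hlow, hup⟩
        · have hqi : q ≤ i := by nlinarith
          exact .inr ⟨q, p, ⟨⟨⟨hq, hqi⟩, hp, by nlinarith⟩, by linarith, by linarith⟩, rfl, rfl⟩
    _ ≤ #(hyperbolaStrip i i) + #((hyperbolaStrip i i).image Prod.swap) := card_union_le _ _
    _ = 2 * #(hyperbolaStrip i i) := by rw [card_image_of_injective _ Prod.swap_injective]; ring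

theorem hyperbolaFibre_eq_Ioc_floor {p : ℤ} (hp : 0 ≤ p) :
    hyperbolaFibre i p = Ioc ⌊(((i : ℝ) - 1) ^ 2 - 1) / (2 * p)⌋ ⌊(i : ℝ) ^ 2 / (2 * p)⌋ := by
  have h2p : (0 : ℤ) ≤ 2 * p := by omega
  rw [hyperbolaFibre, Int.ediv_eq_floor_div (k := ℝ) _ h2p, Int.ediv_eq_floor_div (k := ℝ) _ h2p]
  push_cast
  rfl

theorem hyperbolaFibre_width {p : ℝ} (hp : p ≠ 0) (x : ℝ) :
    x ^ 2 / (2 * p) - ((x - 1) ^ 2 - 1) / (2 * p) = x / p := by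
  field_simp
  ring

theorem div_sub_one_lt_card_hyperbolaFibre {p : ℤ} (hp : 1 ≤ p) :
    (i : ℝ) / p - 1 < #(hyperbolaFibre i p) := by
  have hpR : (0 : ℝ) < p := Int.cast_pos.mpr (by omega)
  rw [hyperbolaFibre_eq_Ioc_floor (by omega), ← hyperbolaFibre_width hpR.ne']
  exact sub_sub_one_lt_card_Ioc_floor _ _

theorem card_hyperbolaFibre_lt (hi : 0 ≤ i) {p : ℤ} (hp : 1 ≤ p) :
    (#(hyperbolaFibre i p) : ℝ) < i / p + 1 := by
  have hpR : (0 : ℝ) < p := Int.cast_pos.mpr (by omega)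
  have hiR : (0 : ℝ) ≤ i := by exact_mod_cast hi
  have hxy : (((i : ℝ) - 1) ^ 2 - 1) / (2 * p) ≤ (i : ℝ) ^ 2 / (2 * p) := by
    gcongr; nlinarith
  rw [hyperbolaFibre_eq_Ioc_floor (by omega), ← hyperbolaFibre_width hpR.ne']
  exact card_Ioc_floor_lt_sub_add_one hxy

theorem sum_card_hyperbolaFibre_le (hi : 0 ≤ i) :
    ((∑ p ∈ Icc 1 i, #(hyperbolaFibre i p) : ℕ) : ℝ) ≤ i * (2 + log i) := by
  have hcard : ((#(Icc 1 i) : ℕ) : ℝ) = i := by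
    rw [Int.card_Icc, add_sub_cancel_right]; exact_mod_cast Int.toNat_of_nonneg hi
  push_cast
  calc ∑ p ∈ Icc 1 i, (#(hyperbolaFibre i p) : ℝ)
      ≤ ∑ p ∈ Icc 1 i, ((i : ℝ) * (p : ℝ)⁻¹ + 1) := sum_le_sum fun p hp => by
        simpa only [div_eq_mul_inv] using (card_hyperbolaFibre_lt hi (mem_Icc.mp hp).1).le
    _ = i * ∑ p ∈ Icc 1 i, (p : ℝ)⁻¹ + i := by
        rw [sum_add_distrib, ← mul_sum, sum_const, nsmul_one, hcard]
    _ ≤ i * (1 + log i) + i := by gcongr; exact sum_Icc_inv_le_one_add_log hi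
    _ = i * (2 + log i) := by ring

theorem le_sum_card_hyperbolaFibre (hi : 2 ≤ i) :
    (i : ℝ) * log i / 4 ≤ ((∑ p ∈ Icc 1 (i / 2), #(hyperbolaFibre i p) : ℕ) : ℝ) := by
  set m := i / 2 with hm
  have hiR : (0 : ℝ) < i := by exact_mod_cast (by omega : 0 < i)
  have hsq : (i : ℝ) ≤ ((m : ℝ) + 1) ^ 2 := by
    have : i ≤ 2 * m + 1 := by omega
    exact_mod_cast (by nlinarith : i ≤ (m + 1) ^ 2)
  have hlog : log i ≤ 2 * log ((m : ℝ) + 1) := by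
    calc log i ≤ log (((m : ℝ) + 1) ^ 2) := log_le_log hiR hsq
      _ = 2 * log ((m : ℝ) + 1) := by rw [log_pow]; norm_num
  push_cast
  calc (i : ℝ) * log i / 4 ≤ i / 2 * log ((m : ℝ) + 1) := by nlinarith
    _ ≤ i / 2 * ∑ p ∈ Icc 1 m, (p : ℝ)⁻¹ := by
        gcongr; exact log_add_one_le_sum_Icc_inv (by omega)
    _ = ∑ p ∈ Icc 1 m, (i : ℝ) / (2 * p) := by
        rw [mul_sum]; exact sum_congr rfl fun p _ => by ring
    _ ≤ ∑ p ∈ Icc 1 m, (#(hyperbolaFibre i p) : ℝ) := sum_le_sum fun p hp => by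
        obtain ⟨hp, hpm⟩ := mem_Icc.mp hp
        have hpR : (0 : ℝ) < p := Int.cast_pos.mpr (by omega)
        have h2p : (2 * p : ℝ) ≤ i := by exact_mod_cast (by omega : 2 * p ≤ i)
        have hone : 1 ≤ (i : ℝ) / (2 * p) := by rw [le_div_iff₀ (by positivity)]; linarith
        have hhalf : (i : ℝ) / p = 2 * ((i : ℝ) / (2 * p)) := by field_simp
        linarith [div_sub_one_lt_card_hyperbolaFibre (i := i) hp]

end Hyperbola

/-- The number of integer points in the positive quadrant lying between the hyperbolae
`2pq = (i-1)²` and `2pq = i²` is of the order of `i·log i`. -/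
theorem card_integer_points_between_hyperbolae_isBigO :
    ∃ c C : ℝ, 0 < c ∧ 0 < C ∧ ∀ i : ℤ, 2 ≤ i →
      c * (i : ℝ) * Real.log (i : ℝ)
          ≤ ({pq : ℤ × ℤ | 1 ≤ pq.1 ∧ 1 ≤ pq.2 ∧
              (i - 1) ^ 2 ≤ 2 * pq.1 * pq.2 ∧ 2 * pq.1 * pq.2 ≤ i ^ 2}.ncard : ℝ) ∧
        ({pq : ℤ × ℤ | 1 ≤ pq.1 ∧ 1 ≤ pq.2 ∧
              (i - 1) ^ 2 ≤ 2 * pq.1 * pq.2 ∧ 2 * pq.1 * pq.2 ≤ i ^ 2}.ncard : ℝ)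
          ≤ C * (i : ℝ) * Real.log (i : ℝ) := by
  refine ⟨1 / 4, 10, by norm_num, by norm_num, fun i hi => ?_⟩
  rw [coe_hyperbolaStrip_sq, Set.ncard_coe_finset]
  have hiR : (0 : ℝ) < i := by exact_mod_cast (by omega : 0 < i)
  have hlog : 1 / 2 < log i :=
    lt_of_lt_of_le (by linarith [log_two_gt_d9]) (log_le_log two_pos (by exact_mod_cast hi))
  constructor
  · calc 1 / 4 * (i : ℝ) * log i = i * log i / 4 := by ring
      _ ≤ ((∑ p ∈ Icc 1 (i / 2), #(hyperbolaFibre i p) : ℕ) : ℝ) := le_sum_card_hyperbolaFibre hi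
      _ ≤ #(hyperbolaStrip i (i ^ 2)) := by
          rw [card_hyperbolaStrip hi]
          have : i / 2 ≤ i := by omega
          exact_mod_cast sum_le_sum_of_subset (Icc_subset_Icc le_rfl (by nlinarith))
  · calc (#(hyperbolaStrip i (i ^ 2)) : ℝ) ≤ 2 * #(hyperbolaStrip i i) := by
          exact_mod_cast card_hyperbolaStrip_sq_le (by omega)
      _ ≤ 2 * (i * (2 + log i)) := by
          rw [card_hyperbolaStrip hi]; gcongr; exact sum_card_hyperbolaFibre_le (by omega)
      _ ≤ 10 * i * log i := by nlinarith [mul_pos hiR (sub_pos.mpr hlog)]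
end
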